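/- Let q be a complex number that is not a root of unity. For every integer m ≥ 1, the pair (α_n^{(m)}, β_n^{(m)}) defined by α_n^{(m)} = q^{mn² + (m−1)n} (1 − q^{2n+1})/(1 − q) and β_n^{(m)} = (1/(q;q)_n) · Σ_{n = n_m ≥ n_{m−1} ≥ ⋯ ≥ n_1 ≥ 0} (1/(q;q)_{n_1}) ∏_{j=1}^{m−1} q^{n_j² + n_j} [n_{j+1} choose n_j]_q forms a Bailey pair relative to q; that is, for every n ≥ 0, (1/(q;q)_n) · Σ_{n = n_m ≥ n_{m−1} ≥ ⋯ ≥ n_1 ≥ 0} (1/(q;q)_{n_1}) ∏_{j=1}^{m−1} q^{n_j² + n_j} [n_{j+1} choose n_j]_q = Σ_{k=0}^{n} ( q^{mk² + (m−1)k} (1 − q^{2k+1})/(1 − q) ) / ( (q;q)_{n−k} · (q²;q)_{n+k} ). -/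

import Mathlib

set_option maxHeartbeats 1000000

open Finset

/-- The q-Pochhammer symbol `(a;q)_n = ∏_{k=0}^{n-1} (1 - a q^k)`. -/
def qPoch (a q : ℂ) (n : ℕ) : ℂ := ∏ k ∈ Finset.range n, (1 - a * q ^ k)

/-- The Gaussian binomial coefficient `[a choose b]_q = (q;q)_a / ((q;q)_{a-b} (q;q)_b)`. -/
noncomputable def qbinR (q : ℂ) (a b : ℕ) : ℂ := qPoch q q a / (qPoch q q (a - b) * qPoch q q b)

lemma qPoch_succ (a q : ℂ) (n : ℕ) : qPoch a q (n+1) = qPoch a q n * (1 - a * q^n) :=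
  Finset.prod_range_succ _ _

lemma qPoch_succ' (a q : ℂ) (n : ℕ) : qPoch a q (n+1) = (1 - a) * qPoch (a*q) q n := by
  rw [qPoch, Finset.prod_range_succ']
  simp only [pow_zero, mul_one, qPoch]
  rw [mul_comm]
  congr 1
  exact Finset.prod_congr rfl fun k _ => by ring

lemma qPoch_add (a q : ℂ) (s t : ℕ) :
    qPoch a q (s + t) = qPoch a q s * qPoch (a * q^s) q t := by
  unfold qPoch
  rw [Finset.prod_range_add]
  congr 1
  exact Finset.prod_congr rfl fun k _ => by rw [mul_assoc, ← pow_add]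

lemma qPoch_zero (a q : ℂ) : qPoch a q 0 = 1 := rfl

section
variable {q : ℂ} (hq : ∀ k : ℕ, 1 ≤ k → q ^ k ≠ 1)
include hq

lemma one_sub_pow_ne (k : ℕ) (hk : 1 ≤ k) : (1 : ℂ) - q ^ k ≠ 0 :=
  sub_ne_zero.mpr (Ne.symm (hq k hk))

lemma qPoch_q_ne (n : ℕ) : qPoch q q n ≠ 0 := by
  unfold qPoch
  apply Finset.prod_ne_zero_iff.mpr
  intro k _
  have : q * q ^ k = q ^ (k+1) := by rw [pow_succ]; ring
  rw [this]
  exact one_sub_pow_ne hq (k+1) (by omega)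

lemma qPoch_q2_ne (n : ℕ) : qPoch (q^2) q n ≠ 0 := by
  unfold qPoch
  apply Finset.prod_ne_zero_iff.mpr
  intro k _
  have : q^2 * q ^ k = q ^ (k+2) := by rw [pow_add]; ring
  rw [this]
  exact one_sub_pow_ne hq (k+2) (by omega)

lemma one_sub_q_ne : (1:ℂ) - q ≠ 0 := by
  have := one_sub_pow_ne hq 1 le_rfl
  simpa using this

end

def G (q : ℂ) : ℕ → ℕ → ℂ
  | _, 0 => 1
  | 0, _+1 => 0
  | n+1, k+1 => q^(k+1) * G q n (k+1) + G q n k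

lemma G_zero (q : ℂ) (n : ℕ) : G q n 0 = 1 := by cases n <;> rfl

lemma G_eq_zero (q : ℂ) : ∀ n k, n < k → G q n k = 0 := by
  intro n
  induction n with
  | zero => intro k hk; match k, hk with | k+1, _ => rfl
  | succ n ih =>
    intro k hk
    match k, hk with
    | k+1, hk =>
      show q^(k+1) * G q n (k+1) + G q n k = 0
      rw [ih (k+1) (by omega), ih k (by omega)]
      ring

lemma G_diag (q : ℂ) : ∀ n, G q n n = 1 := by
  intro n
  induction n with
  | zero => rfl
  | succ n ih =>
    show q^(n+1) * G q n (n+1) + G q n n = 1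
    rw [G_eq_zero q n (n+1) (by omega), ih]; ring

/-- (q)_{n-k} (q)_k G n k = (q)_n -/
lemma G_mul (q : ℂ) : ∀ n k, k ≤ n →
    qPoch q q (n-k) * qPoch q q k * G q n k = qPoch q q n := by
  intro n
  induction n with
  | zero => intro k hk; interval_cases k; simp [G_zero, qPoch]
  | succ n ih =>
    intro k hk
    match k with
    | 0 => simp [G_zero, qPoch]
    | k+1 =>
      show qPoch q q (n+1-(k+1)) * qPoch q q (k+1) * (q^(k+1) * G q n (k+1) + G q n k) = _
      have hkn : k ≤ n := by omega
      rw [Nat.succ_sub_succ]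
      by_cases hkk : k + 1 ≤ n
      · have e1 := ih (k+1) hkk
        have e2 := ih k hkn
        have h1 : qPoch q q (n-k) = qPoch q q (n-k-1) * (1 - q * q^(n-k-1)) := by
          rw [← qPoch_succ]; congr 1; omega
        have h2 : qPoch q q (k+1) = qPoch q q k * (1 - q * q^k) := qPoch_succ _ _ _
        have h3 : qPoch q q (n+1) = qPoch q q n * (1 - q * q^n) := qPoch_succ _ _ _
        have h4 : n - (k+1) = n - k - 1 := by omega
        rw [mul_add]
        calc qPoch q q (n-k) * qPoch q q (k+1) * (q^(k+1) * G q n (k+1))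
              + qPoch q q (n-k) * qPoch q q (k+1) * G q n k
            = (q^(k+1) * (1 - q * q^(n-k-1))) * (qPoch q q (n-(k+1)) * qPoch q q (k+1) * G q n (k+1))
              + (1 - q * q^k) * (qPoch q q (n-k) * qPoch q q k * G q n k) := by
              rw [h1, h2, h4]; ring
          _ = (q^(k+1) * (1 - q * q^(n-k-1)) + (1 - q * q^k)) * qPoch q q n := by
              rw [e1, e2]; ring
          _ = qPoch q q (n+1) := by
              rw [h3]
              have : q^(k+1) * (q * q^(n-k-1)) = q * q^n := by
                rw [← pow_succ', ← pow_succ', ← pow_add]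
                congr 1; omega
              have h2' : q^(k+1) = q * q^k := by rw [pow_succ]; ring
              rw [mul_comm (qPoch q q n)]
              congr 1
              rw [mul_sub, this, h2']
              ring
      · have hk' : n = k := by omega
        subst hk'
        rw [G_eq_zero q n (n+1) (by omega), G_diag, Nat.sub_self]
        show qPoch q q 0 * qPoch q q (n+1) * (q^(n+1)*0 + 1) = qPoch q q (n+1)
        simp [qPoch]

lemma qbinR_eq_G {q : ℂ} (hq : ∀ k : ℕ, 1 ≤ k → q ^ k ≠ 1) (n k : ℕ) (h : k ≤ n) :
    qbinR q n k = G q n k := by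
  have := G_mul q n k h
  rw [qbinR, ← this]
  field_simp [qPoch_q_ne hq]

/-- Key identity: ∑ i, G N i q^{i²} x^i (x q^{i+1};q)_{N-i} = 1 -/
lemma keyA (q : ℂ) : ∀ (N : ℕ) (x : ℂ),
    ∑ i ∈ range (N+1), G q N i * q^(i^2) * x^i * qPoch (x * q^(i+1)) q (N-i) = 1 := by
  intro N
  induction N with
  | zero => intro x; simp [G_zero, qPoch]
  | succ N ih =>
    intro x
    rw [Finset.sum_range_succ']
    -- terms: f (i+1) for i in range (N+1), plus f 0
    have split : ∀ i ∈ range (N+1),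
        G q (N+1) (i+1) * q^((i+1)^2) * x^(i+1) * qPoch (x * q^(i+1+1)) q (N+1-(i+1))
        = (q^(i+1) * G q N (i+1)) * q^((i+1)^2) * x^(i+1) * qPoch ((x*q) * q^(i+1)) q (N-i)
          + (G q N i * q^(i^2) * (x*q)^i * qPoch ((x*q) * q^(i+1)) q (N-i)) * (x * q^(i+1)) := by
      intro i _
      show (q^(i+1) * G q N (i+1) + G q N i) * _ * _ * _ = _
      have e1 : N+1-(i+1) = N-i := by omega
      have e2 : x * q^(i+1+1) = (x*q) * q^(i+1) := by ring
      rw [e1, e2]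
      have e3 : (i+1)^2 = i^2 + (2*i+1) := by ring
      rw [e3, pow_add]
      ring
    rw [Finset.sum_congr rfl split, Finset.sum_add_distrib]
    -- second piece: ∑ u' i * (x q^{i+1})
    -- first piece + f 0 : ∑ (1 - x q^{i+1}) u' i   via g j trick
    have hg : ∀ j, (fun j => q^j * G q N j * q^(j^2) * x^j * qPoch (x*q^(j+1)) q (N+1-j)) j
        = (fun j => q^j * G q N j * q^(j^2) * x^j * qPoch (x*q^(j+1)) q (N+1-j)) j := fun _ => rfl
    set g : ℕ → ℂ := fun j => q^j * G q N j * q^(j^2) * x^j * qPoch (x*q^(j+1)) q (N+1-j) with hgdef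
    have e0 : G q (N+1) 0 * q^(0^2) * x^0 * qPoch (x * q^(0+1)) q (N+1-0) = g 0 := by
      simp [hgdef, G_zero]
    have efirst : ∀ i ∈ range (N+1),
        (q^(i+1) * G q N (i+1)) * q^((i+1)^2) * x^(i+1) * qPoch ((x*q) * q^(i+1)) q (N-i) = g (i+1) := by
      intro i _
      simp only [hgdef]
      have h1 : N+1-(i+1) = N-i := by omega
      have h2 : x * q^(i+1+1) = (x*q) * q^(i+1) := by ring
      rw [h1, h2]
    rw [Finset.sum_congr rfl efirst, add_right_comm, e0, ← Finset.sum_range_succ']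
    -- now have ∑_{j in range (N+2)} g j + ∑ u' i * (x q^{i+1})
    rw [Finset.sum_range_succ]
    have gtop : g (N+1) = 0 := by
      simp [hgdef, G_eq_zero q N (N+1) (by omega)]
    rw [gtop, add_zero]
    have gformula : ∀ j ∈ range (N+1), g j
        = (G q N j * q^(j^2) * (x*q)^j * qPoch ((x*q) * q^(j+1)) q (N-j)) * (1 - x*q^(j+1)) := by
      intro j hj
      simp only [hgdef]
      have hj' : j ≤ N := by simp at hj; omega
      have : N+1-j = (N-j)+1 := by omega
      rw [this, qPoch_succ', mul_pow]
      have : x * q ^ (j + 1) * q = x * q * q ^ (j + 1) := by ring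
      rw [this]
      ring
    rw [Finset.sum_congr rfl gformula, ← Finset.sum_add_distrib]
    have final : ∀ j ∈ range (N+1),
        (G q N j * q^(j^2) * (x*q)^j * qPoch ((x*q) * q^(j+1)) q (N-j)) * (1 - x*q^(j+1))
        + (G q N j * q^(j^2) * (x*q)^j * qPoch ((x*q) * q^(j+1)) q (N-j)) * (x * q^(j+1))
        = G q N j * q^(j^2) * (x*q)^j * qPoch ((x*q) * q^(j+1)) q (N-j) := by
      intro j _; ring
    rw [Finset.sum_congr rfl final, ih (x*q)]

lemma pow_mul_pow (q : ℂ) {a b c : ℕ} (h : a + b = c) : q^a * q^b = q^c := by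
  subst h; rw [pow_add]

lemma q_mul_pow (q : ℂ) {a c : ℕ} (h : 1 + a = c) : q * q^a = q^c := by
  subst h; rw [pow_add, pow_one]

section
variable {q : ℂ} (hq : ∀ k : ℕ, 1 ≤ k → q ^ k ≠ 1)
include hq

lemma keyC (N k : ℕ) :
    ∑ i ∈ range (N+1),
      q^((k+i)^2+(k+i)) / (qPoch q q (N-i) * qPoch q q i * qPoch (q^2) q (2*k+i))
    = q^(k^2+k) / (qPoch q q N * qPoch (q^2) q (N+2*k)) := by
  have hA := keyA q N (q^(2*k+1))
  have hterm : ∀ i ∈ range (N+1),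
      q^((k+i)^2+(k+i)) / (qPoch q q (N-i) * qPoch q q i * qPoch (q^2) q (2*k+i))
      = (q^(k^2+k) / (qPoch q q N * qPoch (q^2) q (N+2*k))) *
        (G q N i * q^(i^2) * (q^(2*k+1))^i * qPoch (q^(2*k+1) * q^(i+1)) q (N-i)) := by
    intro i hi
    have hiN : i ≤ N := by simp at hi; omega
    have hGm := G_mul q N i hiN
    have hsplit : qPoch (q^2) q (N+2*k)
        = qPoch (q^2) q (2*k+i) * qPoch (q^(2*k+1) * q^(i+1)) q (N-i) := by
      rw [show q^(2*k+1)*q^(i+1) = q^2 * q^(2*k+i) by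
        rw [← pow_add, ← pow_add]; congr 1; omega]
      rw [← qPoch_add]; congr 1; omega
    have hG0 : G q N i ≠ 0 := by
      intro h0
      apply qPoch_q_ne hq N
      rw [← hGm, h0, mul_zero]
    have hQ2 : qPoch (q^(2*k+1) * q^(i+1)) q (N-i) ≠ 0 := by
      intro h0
      apply qPoch_q2_ne hq (N+2*k)
      rw [hsplit, h0, mul_zero]
    rw [hsplit, ← hGm]
    rw [show (k+i)^2+(k+i) = (k^2+k) + (i^2 + (2*k+1)*i) by ring]
    rw [pow_add, pow_add, ← pow_mul]
    field_simp [qPoch_q_ne hq, qPoch_q2_ne hq, hG0, hQ2]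
    ring
  rw [Finset.sum_congr rfl hterm, ← Finset.mul_sum, hA, mul_one]

/-- base case telescoping -/
lemma keyD (n : ℕ) :
    ∑ k ∈ range (n+1),
      q^(k^2) * (1 - q^(2*k+1)) / (1-q) / (qPoch q q (n-k) * qPoch (q^2) q (n+k))
    = 1 / (qPoch q q n * qPoch q q n) := by
  have hu := Finset.sum_range_sub' (fun k =>
    if k ≤ n then q^(k^2) / (qPoch q q (n-k) * qPoch q q (n+k)) else 0) (n+1)
  have hterm : ∀ k ∈ range (n+1),
      q^(k^2) * (1 - q^(2*k+1)) / (1-q) / (qPoch q q (n-k) * qPoch (q^2) q (n+k))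
      = (if k ≤ n then q^(k^2) / (qPoch q q (n-k) * qPoch q q (n+k)) else 0)
        - (if k+1 ≤ n then q^((k+1)^2) / (qPoch q q (n-(k+1)) * qPoch q q (n+(k+1))) else 0) := by
    intro k hk
    have hkn : k ≤ n := by simp at hk; omega
    have d2 : qPoch (q^2) q (n+k) = qPoch q q (n+k) * (1 - q^(n+k+1)) / (1-q) := by
      have h1 : qPoch q q (n+k+1) = (1-q) * qPoch (q^2) q (n+k) := by
        rw [qPoch_succ' q q (n+k), show q*q = q^2 by ring]
      have h2 : qPoch q q (n+k+1) = qPoch q q (n+k) * (1 - q^(n+k+1)) := by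
        rw [qPoch_succ q q (n+k), q_mul_pow q (show 1+(n+k) = n+k+1 by omega)]
      rw [eq_div_iff (one_sub_q_ne hq), mul_comm _ (1-q), ← h1, h2]
    by_cases hklt : k < n
    · rw [if_pos hkn, if_pos (by omega)]
      have d1 : qPoch q q (n-k) = qPoch q q (n-k-1) * (1 - q^(n-k)) := by
        have h := qPoch_succ q q (n-k-1)
        rw [show n-k-1+1 = n-k by omega] at h
        rw [h, q_mul_pow q (show 1+(n-k-1) = n-k by omega)]
      have d1' : n - (k+1) = n-k-1 := by omega
      have p4 : q^((k+1)^2) = q^(k^2) * q^(2*k+1) :=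
        (pow_mul_pow q (show k^2+(2*k+1) = (k+1)^2 by ring)).symm
      have p5 : q^(n+k+1) = q^(2*k+1) * q^(n-k) :=
        (pow_mul_pow q (show 2*k+1+(n-k) = n+k+1 by omega)).symm
      have p6 : qPoch q q (n+(k+1)) = qPoch q q (n+k) * (1 - q^(2*k+1) * q^(n-k)) := by
        rw [show n+(k+1) = (n+k)+1 by omega, qPoch_succ,
          q_mul_pow q (show 1+(n+k) = n+k+1 by omega), p5]
      have h1X : (1:ℂ) - q^(n-k) ≠ 0 := one_sub_pow_ne hq (n-k) (by omega)
      have h1BX : (1:ℂ) - q^(2*k+1) * q^(n-k) ≠ 0 := by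
        rw [pow_mul_pow q (show 2*k+1+(n-k) = n+k+1 by omega)]
        exact one_sub_pow_ne hq (n+k+1) (by omega)
      have e1 := qPoch_q_ne hq (n-k-1)
      have e2 := qPoch_q_ne hq (n+k)
      have gen : ∀ (P1 P2 A B X : ℂ), P1 ≠ 0 → P2 ≠ 0 → (1 - X) ≠ 0 → (1 - B*X) ≠ 0 →
          A * (1 - B) / (1-q) / ((P1 * (1-X)) * (P2 * (1 - B*X) / (1-q)))
          = A / (P1 * (1-X) * P2) - A*B / (P1 * (P2 * (1 - B*X))) := by
        intro P1 P2 A B X h1 h2 h3 h4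
        have h5 := one_sub_q_ne hq
        field_simp
        ring
      rw [d2, p5, d1, p6, d1', p4]
      exact gen _ _ _ _ _ e1 e2 h1X h1BX
    · have hkn' : k = n := by omega
      subst hkn'
      rw [if_pos le_rfl, if_neg (by omega), sub_zero, d2, Nat.sub_self]
      have h1 : (1:ℂ) - q^(k+k+1) ≠ 0 := one_sub_pow_ne hq (k+k+1) (by omega)
      have e2 := qPoch_q_ne hq (k+k)
      rw [show qPoch q q 0 = 1 by rfl, show (2*k+1) = k+k+1 by ring]
      field_simp [one_sub_q_ne hq]
  rw [Finset.sum_congr rfl hterm, hu, if_pos (by omega : 0 ≤ n), if_neg (by omega : ¬ n+1 ≤ n)]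
  simp

end

noncomputable def T (q : ℂ) : ℕ → ℕ → ℂ
  | 0, n => 1 / qPoch q q n
  | (M+1), n => ∑ j ∈ range (n+1), q^(j^2+j) * qbinR q n j * T q M j

lemma sum_swap_tri (n : ℕ) (f : ℕ → ℕ → ℂ) :
    ∑ j ∈ range (n+1), ∑ k ∈ range (j+1), f j k
    = ∑ k ∈ range (n+1), ∑ j ∈ Icc k n, f j k := by
  calc ∑ j ∈ range (n+1), ∑ k ∈ range (j+1), f j k
      = ∑ j ∈ range (n+1), ∑ k ∈ range (n+1), if k ≤ j then f j k else 0 := by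
        refine Finset.sum_congr rfl fun j hj => ?_
        rw [← Finset.sum_filter]
        apply Finset.sum_congr _ (fun _ _ => rfl)
        ext k
        simp only [Finset.mem_filter, Finset.mem_range] at *
        omega
    _ = ∑ k ∈ range (n+1), ∑ j ∈ range (n+1), if k ≤ j then f j k else 0 := Finset.sum_comm
    _ = ∑ k ∈ range (n+1), ∑ j ∈ Icc k n, f j k := by
        refine Finset.sum_congr rfl fun k hk => ?_
        rw [← Finset.sum_filter]
        apply Finset.sum_congr _ (fun _ _ => rfl)
        ext j
        simp only [Finset.mem_filter, Finset.mem_range, Finset.mem_Icc] at *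
        omega

section
variable {q : ℂ} (hq : ∀ k : ℕ, 1 ≤ k → q ^ k ≠ 1)
include hq

lemma mainT (M : ℕ) : ∀ n : ℕ, (1 / qPoch q q n) * T q M n
    = ∑ k ∈ range (n+1), q^((M+1)*k^2 + M*k) * (1 - q^(2*k+1)) / (1-q)
        / (qPoch q q (n-k) * qPoch (q^2) q (n+k)) := by
  induction M with
  | zero =>
    intro n
    show (1/qPoch q q n) * (1/qPoch q q n) = _
    rw [div_mul_div_comm, one_mul, ← keyD hq n]
    refine Finset.sum_congr rfl fun k _ => ?_
    norm_num
  | succ M ih =>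
    intro n
    show (1/qPoch q q n) * ∑ j ∈ range (n+1), q^(j^2+j) * qbinR q n j * T q M j = _
    rw [Finset.mul_sum]
    have step1 : ∀ j ∈ range (n+1),
        (1/qPoch q q n) * (q^(j^2+j) * qbinR q n j * T q M j)
        = ∑ k ∈ range (j+1), (q^(j^2+j) / qPoch q q (n-j)) *
            (q^((M+1)*k^2 + M*k) * (1 - q^(2*k+1)) / (1-q)
              / (qPoch q q (j-k) * qPoch (q^2) q (j+k))) := by
      intro j hj
      have hjn : j ≤ n := by simp at hj; omega
      have h1 : (1/qPoch q q n) * (q^(j^2+j) * qbinR q n j * T q M j)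
          = (q^(j^2+j) / qPoch q q (n-j)) * ((1/qPoch q q j) * T q M j) := by
        rw [qbinR]
        have e1 := qPoch_q_ne hq n
        have e2 := qPoch_q_ne hq (n-j)
        have e3 := qPoch_q_ne hq j
        field_simp
      rw [h1, ih j, Finset.mul_sum]
    rw [Finset.sum_congr rfl step1, sum_swap_tri n _]
    refine Finset.sum_congr rfl fun k hk => ?_
    have hkn : k ≤ n := by simp at hk; omega
    rw [show Icc k n = Ico k (n+1) from (Finset.Ico_add_one_right_eq_Icc k n).symm,
      Finset.sum_Ico_eq_sum_range, show n+1-k = (n-k)+1 by omega]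
    have inner : ∀ i ∈ range ((n-k)+1),
        (q^((k+i)^2+(k+i)) / qPoch q q (n-(k+i))) *
          (q^((M+1)*k^2+M*k) * (1 - q^(2*k+1)) / (1-q)
            / (qPoch q q ((k+i)-k) * qPoch (q^2) q ((k+i)+k)))
        = (q^((M+1)*k^2+M*k) * (1 - q^(2*k+1)) / (1-q)) *
          (q^((k+i)^2+(k+i)) / (qPoch q q ((n-k)-i) * qPoch q q i * qPoch (q^2) q (2*k+i))) := by
      intro i hi
      rw [show n-(k+i) = (n-k)-i by omega, show (k+i)-k = i by omega,
        show (k+i)+k = 2*k+i by omega]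
      ring
    rw [Finset.sum_congr rfl inner, ← Finset.mul_sum, keyC hq (n-k) k,
      show (n-k)+2*k = n+k by omega,
      ← pow_mul_pow q (show ((M+1)*k^2+M*k) + (k^2+k) = (M+1+1)*k^2+(M+1)*k by ring)]
    ring

end

noncomputable def CS (q : ℂ) (M n : ℕ) : ℂ :=
  ∑ f ∈ Finset.univ.filter
      (fun f : Fin (M+1) → Fin (n+1) =>
        (∀ i j, i ≤ j → f i ≤ f j) ∧ ((f ⟨M+1-1, by omega⟩ : ℕ) = n)),
    (fun nn : ℕ → ℕ =>
      (1 / qPoch q q (nn 1)) *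
        ∏ j ∈ Finset.Icc 1 (M+1-1),
          q ^ (nn j ^ 2 + nn j) * qbinR q (nn (j+1)) (nn j))
    (fun i => if h : i - 1 < M+1 then (f ⟨i-1, h⟩ : ℕ) else 0)

lemma CS_zero (q : ℂ) (n : ℕ) : CS q 0 n = T q 0 n := by
  rw [CS]
  have hset : (Finset.univ.filter
      (fun f : Fin 1 → Fin (n+1) =>
        (∀ i j, i ≤ j → f i ≤ f j) ∧ ((f ⟨0, by omega⟩ : ℕ) = n)))
      = {fun _ => (⟨n, Nat.lt_succ_self n⟩ : Fin (n+1))} := by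
    ext f
    simp only [Finset.mem_filter, Finset.mem_univ, true_and, Finset.mem_singleton]
    constructor
    · rintro ⟨-, h2⟩
      funext i
      have hi : i = ⟨0, by omega⟩ := Subsingleton.elim _ _
      subst hi
      exact Fin.ext h2
    · rintro rfl
      exact ⟨fun i j _ => le_refl _, rfl⟩
  rw [hset, Finset.sum_singleton]
  show (1 / qPoch q q n) * ∏ j ∈ Finset.Icc 1 0, _ = T q 0 n
  rw [show Finset.Icc 1 0 = (∅ : Finset ℕ) from rfl, Finset.prod_empty, mul_one]
  rfl

lemma bigTerm_eq (q : ℂ) (m : ℕ) (nn1 nn2 : ℕ → ℕ) (h : ∀ t, 1 ≤ t → t ≤ m+1 → nn1 t = nn2 t) :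
    (1 / qPoch q q (nn1 1)) * ∏ t ∈ Finset.Icc 1 m, q^(nn1 t^2 + nn1 t) * qbinR q (nn1 (t+1)) (nn1 t)
    = (1 / qPoch q q (nn2 1)) * ∏ t ∈ Finset.Icc 1 m, q^(nn2 t^2 + nn2 t) * qbinR q (nn2 (t+1)) (nn2 t) := by
  rw [h 1 le_rfl (by omega)]
  congr 1
  apply Finset.prod_congr rfl
  intro t ht
  simp only [Finset.mem_Icc] at ht
  rw [h t ht.1 (by omega), h (t+1) (by omega) (by omega)]

lemma CS_succ (q : ℂ) (M n : ℕ) :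
    CS q (M+1) n = ∑ j ∈ range (n+1), q^(j^2+j) * qbinR q n j * CS q M j := by
  rw [CS]
  rw [← Finset.sum_fiberwise _ (fun f : Fin (M+1+1) → Fin (n+1) => f ⟨M, by omega⟩)]
  rw [← Fin.sum_univ_eq_sum_range (fun j => q^(j^2+j) * qbinR q n j * CS q M j) (n+1)]
  refine Finset.sum_congr rfl fun j _ => ?_
  -- j : Fin (n+1); inner sum over f with f ⟨M⟩ = j
  rw [CS, Finset.mul_sum]
  refine Finset.sum_nbij'
    (i := fun (f : Fin (M+1+1) → Fin (n+1)) (t : Fin (M+1)) =>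
      (⟨min (f ⟨t.1, by omega⟩ : ℕ) (j : ℕ), by omega⟩ : Fin ((j:ℕ)+1)))
    (j := fun (g : Fin (M+1) → Fin ((j:ℕ)+1)) (t : Fin (M+1+1)) =>
      if h : (t:ℕ) < M+1 then (⟨(g ⟨t.1, h⟩ : ℕ), by omega⟩ : Fin (n+1))
      else ⟨n, by omega⟩)
    ?_ ?_ ?_ ?_ ?_
  · -- maps to
    intro f hf
    simp only [Finset.mem_filter, Finset.mem_univ, true_and] at hf ⊢
    obtain ⟨⟨hmono, htop⟩, hfib⟩ := hf
    refine ⟨fun s t hst => ?_, ?_⟩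
    · simp only [Fin.mk_le_mk]
      exact min_le_min (hmono _ _ (by simpa using hst)) le_rfl
    · show min ((f ⟨M, by omega⟩ : Fin (n+1)) : ℕ) (j:ℕ) = (j:ℕ)
      rw [hfib]
      exact min_self _
  · -- maps from
    intro g hg
    simp only [Finset.mem_filter, Finset.mem_univ, true_and] at hg ⊢
    obtain ⟨hmono, htop⟩ := hg
    have hjn : (j:ℕ) ≤ n := by omega
    refine ⟨⟨fun s t hst => ?_, ?_⟩, ?_⟩
    · by_cases hs : (s:ℕ) < M+1
      · by_cases ht : (t:ℕ) < M+1
        · simp only [dif_pos hs, dif_pos ht, Fin.mk_le_mk]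
          exact hmono ⟨s.1, hs⟩ ⟨t.1, ht⟩ (by simpa using hst)
        · simp only [dif_pos hs, dif_neg ht, Fin.mk_le_mk]
          have := (g ⟨s.1, hs⟩).2
          omega
      · have ht : ¬ (t:ℕ) < M+1 := by
          have : (s:ℕ) ≤ (t:ℕ) := hst
          omega
        simp only [dif_neg hs, dif_neg ht, le_refl]
    · show (dite _ _ _ : Fin (n+1)).val = n
      rw [dif_neg (by omega : ¬ (M+1+1-1 : ℕ) < M+1)]
    · show (dite _ _ _ : Fin (n+1)) = j
      rw [dif_pos (by omega : (M:ℕ) < M+1)]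
      apply Fin.ext
      simpa using htop
  · -- left inverse
    intro f hf
    simp only [Finset.mem_filter, Finset.mem_univ, true_and] at hf
    obtain ⟨⟨hmono, htop⟩, hfib⟩ := hf
    funext t
    by_cases ht : (t:ℕ) < M+1
    · simp only [dif_pos ht]
      apply Fin.ext
      show min ((f ⟨t.1, by omega⟩ : Fin (n+1)) : ℕ) (j:ℕ) = (f t : ℕ)
      have h1 : f ⟨t.1, by omega⟩ ≤ f ⟨M, by omega⟩ := hmono _ _ (by rw [Fin.mk_le_mk]; omega)
      have : (⟨t.1, by omega⟩ : Fin (M+1+1)) = t := rfl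
      rw [this]
      rw [hfib] at h1
      exact min_eq_left h1
    · simp only [dif_neg ht]
      apply Fin.ext
      show n = (f t : ℕ)
      have htt : t = ⟨M+1, by omega⟩ := by
        apply Fin.ext; have := t.2; simp; omega
      rw [htt]
      exact htop.symm
  · -- right inverse
    intro g hg
    funext t
    have ht : (t:ℕ) < M+1 := t.2
    simp only [dif_pos ht]
    apply Fin.ext
    show min ((g ⟨t.1, ht⟩ : Fin ((j:ℕ)+1)) : ℕ) (j:ℕ) = (g t : ℕ)
    have : (⟨t.1, ht⟩ : Fin (M+1)) = t := rfl
    rw [this]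
    exact min_eq_left (by omega)
  · -- term equality
    intro f hf
    simp only [Finset.mem_filter, Finset.mem_univ, true_and] at hf
    obtain ⟨⟨hmono, htop⟩, hfib⟩ := hf
    have hjv : ((f ⟨M, by omega⟩ : Fin (n+1)) : ℕ) = (j:ℕ) := congrArg Fin.val hfib
    simp only [Nat.add_sub_cancel]
    rw [Finset.prod_Icc_succ_top (by omega : 1 ≤ M+1)]
    have hA1 : (if h : M+1-1 < M+1+1 then ((f ⟨M+1-1, h⟩ : Fin (n+1)) : ℕ) else 0) = (j:ℕ) := by
      rw [dif_pos (by omega : M+1-1 < M+1+1)]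
      exact hjv
    have hA2 : (if h : M+1 < M+1+1 then ((f ⟨M+1, h⟩ : Fin (n+1)) : ℕ) else 0) = n := by
      rw [dif_pos (by omega : M+1 < M+1+1)]
      exact htop
    rw [hA1, hA2]
    have hmin : ∀ (x : ℕ) (hx : x < M+1), min ((f ⟨x, by omega⟩ : Fin (n+1)) : ℕ) (j:ℕ)
        = ((f ⟨x, by omega⟩ : Fin (n+1)) : ℕ) := by
      intro x hx
      refine min_eq_left ?_
      rw [← hjv]
      exact hmono _ _ (by rw [Fin.mk_le_mk]; omega)
    have hB1 : (if h : 1-1 < M+1 then min ((f ⟨1-1, by omega⟩ : Fin (n+1)) : ℕ) (j:ℕ) else 0)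
        = (if h : 1-1 < M+1+1 then ((f ⟨1-1, h⟩ : Fin (n+1)) : ℕ) else 0) := by
      rw [dif_pos (by omega : 1-1 < M+1), dif_pos (by omega : 1-1 < M+1+1)]
      exact hmin 0 (by omega)
    have hBP : (∏ x ∈ Finset.Icc 1 M,
          q ^ ((if h : x - 1 < M + 1 then min ((f ⟨x-1, by omega⟩ : Fin (n+1)) : ℕ) (j:ℕ) else 0) ^ 2 +
                if h : x - 1 < M + 1 then min ((f ⟨x-1, by omega⟩ : Fin (n+1)) : ℕ) (j:ℕ) else 0) *
            qbinR q (if h : x < M + 1 then min ((f ⟨x, by omega⟩ : Fin (n+1)) : ℕ) (j:ℕ) else 0)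
              (if h : x - 1 < M + 1 then min ((f ⟨x-1, by omega⟩ : Fin (n+1)) : ℕ) (j:ℕ) else 0))
        = ∏ x ∈ Finset.Icc 1 M,
          q ^ ((if h : x - 1 < M + 1 + 1 then ((f ⟨x-1, h⟩ : Fin (n+1)) : ℕ) else 0) ^ 2 +
                if h : x - 1 < M + 1 + 1 then ((f ⟨x-1, h⟩ : Fin (n+1)) : ℕ) else 0) *
            qbinR q (if h : x < M + 1 + 1 then ((f ⟨x, h⟩ : Fin (n+1)) : ℕ) else 0)
              (if h : x - 1 < M + 1 + 1 then ((f ⟨x-1, h⟩ : Fin (n+1)) : ℕ) else 0) := by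
      refine Finset.prod_congr rfl fun x hx => ?_
      simp only [Finset.mem_Icc] at hx
      simp only [dif_pos (show x-1 < M+1 by omega), dif_pos (show x < M+1 by omega),
        dif_pos (show x-1 < M+1+1 by omega), dif_pos (show x < M+1+1 by omega),
        hmin (x-1) (by omega), hmin x (by omega)]
    rw [hBP, hB1]
    ring

lemma CS_eq_T (q : ℂ) : ∀ M n, CS q M n = T q M n := by
  intro M
  induction M with
  | zero => exact CS_zero q
  | succ M ih =>
    intro n
    rw [CS_succ]
    show _ = T q (M+1) n
    rw [show T q (M+1) n = ∑ j ∈ range (n+1), q^(j^2+j) * qbinR q n j * T q M j from rfl]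
    exact Finset.sum_congr rfl fun k _ => by rw [ih]

theorem stmt16 (q : ℂ) (hq : ∀ k : ℕ, 1 ≤ k → q ^ k ≠ 1) (m : ℕ) (hm : 1 ≤ m) (n : ℕ) :
    (1 / qPoch q q n) *
      ∑ f ∈ Finset.univ.filter
          (fun f : Fin m → Fin (n+1) =>
            (∀ i j, i ≤ j → f i ≤ f j) ∧ (f ⟨m-1, by omega⟩ : ℕ) = n),
        (fun nn : ℕ → ℕ =>
          (1 / qPoch q q (nn 1)) *
            ∏ j ∈ Finset.Icc 1 (m-1),
              q ^ (nn j ^ 2 + nn j) * qbinR q (nn (j+1)) (nn j))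
        (fun i => if h : i - 1 < m then (f ⟨i-1, h⟩ : ℕ) else 0)
    = ∑ k ∈ Finset.range (n+1),
        (q ^ (m*k^2 + (m-1)*k) * (1 - q ^ (2*k+1)) / (1 - q)) /
          (qPoch q q (n-k) * qPoch (q^2) q (n+k)) := by
  obtain ⟨M, rfl⟩ : ∃ M, m = M + 1 := ⟨m - 1, by omega⟩
  show (1 / qPoch q q n) * CS q M n = _
  rw [CS_eq_T, mainT hq M n]
  refine Finset.sum_congr rfl fun k _ => ?_
  norm_num
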